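/- For ν ≥ ν₀ (where ν₀ is the positive root of √π Γ(ν+3/2) = 8 Γ(ν+1)), the coefficients a_n of z·B_ν(z) satisfy a_1 ≥ 8 a_2 and (n−1)a_n ≥ (n+1)a_{n+1} for all n ≥ 2. -/

import Mathlib

/-!
Everything comes from the log-convexity of `Γ` on `(0, ∞)`. It makes `Γ (x + 1/2) / Γ x`
nondecreasing, so `8 Γ(ν + 1) ≤ √π Γ(ν + 3/2)` propagates from the root `ν₀` to every `ν ≥ ν₀`.
Its midpoint case is Gautschi's bound `Γ (x + 1/2)² ≤ x Γ(x)²`, which controls `a (n + 1) / a n`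
as soon as `ν ≥ 5/4`; applied at `ν₀` it turns the root equation into `64 ≤ π (ν₀ + 1)`,
so `ν₀ ≥ 15`.
-/

open Real

theorem ConvexOn.add_le_add_of_shift {𝕜 : Type*} [Field 𝕜] [LinearOrder 𝕜]
    [IsStrictOrderedRing 𝕜] {s : Set 𝕜} {f : 𝕜 → 𝕜} (hf : ConvexOn 𝕜 s f) {a b t : 𝕜} (ha : a ∈ s) (hbt : b + t ∈ s)
    (hab : a ≤ b) (ht : 0 ≤ t) : f (a + t) + f b ≤ f a + f (b + t) := by
  rcases (add_nonneg (sub_nonneg.2 hab) ht).eq_or_lt with hd | hd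
  · obtain rfl : t = 0 := by linarith
    obtain rfl : b = a := by linarith
    exact (add_comm _ _).le
  -- `a + t` and `b` are the convex combinations of `a` and `b + t` with swapped weights.
  have hsum : (b - a) / (b - a + t) + t / (b - a + t) = 1 := by field_simp
  have hw₁ : 0 ≤ (b - a) / (b - a + t) := div_nonneg (sub_nonneg.2 hab) hd.le
  have hw₂ : 0 ≤ t / (b - a + t) := div_nonneg ht hd.le
  have h₁ := hf.2 ha hbt hw₁ hw₂ hsum
  have h₂ := hf.2 ha hbt hw₂ hw₁ (by rw [add_comm, hsum])
  simp only [smul_eq_mul] at h₁ h₂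
  have e₁ : (b - a) / (b - a + t) * a + t / (b - a + t) * (b + t) = a + t := by
    field_simp; ring
  have e₂ : t / (b - a + t) * a + (b - a) / (b - a + t) * (b + t) = b := by
    field_simp; ring
  rw [e₁] at h₁
  rw [e₂] at h₂
  linear_combination h₁ + h₂ + (f a + f (b + t)) * hsum

namespace Real

theorem Gamma_add_mul_Gamma_le_Gamma_mul_Gamma_add {a b t : ℝ} (ha : 0 < a) (hab : a ≤ b)
    (ht : 0 ≤ t) : Gamma (a + t) * Gamma b ≤ Gamma a * Gamma (b + t) := by
  have hb : 0 < b := ha.trans_le hab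
  have h := convexOn_log_Gamma.add_le_add_of_shift (Set.mem_Ioi.2 ha)
    (Set.mem_Ioi.2 (by linarith : 0 < b + t)) hab ht
  have hat := Gamma_pos_of_pos (by linarith : 0 < a + t)
  have hbt := Gamma_pos_of_pos (by linarith : 0 < b + t)
  have ha' := Gamma_pos_of_pos ha
  have hb' := Gamma_pos_of_pos hb
  simp only [Function.comp_apply] at h
  rwa [← log_mul hat.ne' hb'.ne', ← log_mul ha'.ne' hbt.ne',
    log_le_log_iff (by positivity) (by positivity)] at h

theorem Gamma_add_half_sq_le {x : ℝ} (hx : 0 < x) : Gamma (x + 1 / 2) ^ 2 ≤ x * Gamma x ^ 2 := by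
  have h := Gamma_add_mul_Gamma_le_Gamma_mul_Gamma_add hx (le_add_of_nonneg_right one_half_pos.le)
    one_half_pos.le
  rw [add_assoc, add_halves, Gamma_add_one hx.ne'] at h
  linarith

end Real

noncomputable def besselStruveCoeff (ν : ℝ) (n : ℕ) : ℝ :=
  Gamma (ν + 1) * Gamma ((n : ℝ) / 2) /
    (√π * ((n - 1).factorial : ℝ) * Gamma (((n : ℝ) + 1) / 2 + ν))

theorem besselStruveCoeff_two (ν : ℝ) :
    besselStruveCoeff ν 2 = Gamma (ν + 1) / (√π * Gamma (ν + 3 / 2)) := by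
  norm_num [besselStruveCoeff, Gamma_one]
  ring_nf

theorem fifteen_le_of_sqrt_pi_mul_Gamma_eq {ν₀ : ℝ} (hν₀ : 0 < ν₀)
    (hroot : √π * Gamma (ν₀ + 3 / 2) = 8 * Gamma (ν₀ + 1)) : 15 ≤ ν₀ := by
  have hsq : Gamma (ν₀ + 1 + 1 / 2) ^ 2 ≤ (ν₀ + 1) * Gamma (ν₀ + 1) ^ 2 :=
    Gamma_add_half_sq_le (by linarith)
  rw [add_assoc, show (1 : ℝ) + 1 / 2 = 3 / 2 by norm_num] at hsq
  have hroot_sq : π * Gamma (ν₀ + 3 / 2) ^ 2 = 64 * Gamma (ν₀ + 1) ^ 2 := by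
    rw [← sq_sqrt pi_pos.le, ← mul_pow, hroot]; ring
  have hΓ : 0 < Gamma (ν₀ + 1) ^ 2 := pow_pos (Gamma_pos_of_pos (by linarith)) 2
  have h64 : 64 ≤ π * (ν₀ + 1) := by
    nlinarith [mul_le_mul_of_nonneg_left hsq pi_pos.le]
  nlinarith [pi_le_four]

theorem eight_mul_Gamma_le_of_sqrt_pi_mul_Gamma_eq {ν₀ ν : ℝ} (hν₀ : 0 < ν₀)
    (hroot : √π * Gamma (ν₀ + 3 / 2) = 8 * Gamma (ν₀ + 1)) (hν : ν₀ ≤ ν) :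
    8 * Gamma (ν + 1) ≤ √π * Gamma (ν + 3 / 2) := by
  have hshift := Gamma_add_mul_Gamma_le_Gamma_mul_Gamma_add (a := ν₀ + 1) (b := ν + 1)
    (t := 1 / 2) (by linarith) (by linarith) one_half_pos.le
  rw [add_assoc, add_assoc ν, show (1 : ℝ) + 1 / 2 = 3 / 2 by norm_num] at hshift
  refine le_of_mul_le_mul_left ?_ (Gamma_pos_of_pos (by linarith : 0 < ν₀ + 1))
  calc Gamma (ν₀ + 1) * (8 * Gamma (ν + 1))
      = (√π * Gamma (ν₀ + 3 / 2)) * Gamma (ν + 1) := by rw [hroot]; ring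
    _ = √π * (Gamma (ν₀ + 3 / 2) * Gamma (ν + 1)) := by ring
    _ ≤ √π * (Gamma (ν₀ + 1) * Gamma (ν + 3 / 2)) := by gcongr
    _ = Gamma (ν₀ + 1) * (√π * Gamma (ν + 3 / 2)) := by ring

theorem succ_mul_Gamma_mul_Gamma_le {n ν : ℝ} (hn : 2 ≤ n) (hν : 5 / 4 ≤ ν) :
    (n + 1) * Gamma ((n + 1) / 2) * Gamma ((n + 1) / 2 + ν)
      ≤ (n - 1) * n * Gamma (n / 2) * Gamma (n / 2 + ν + 1) := by
  set x := n / 2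
  set y := n / 2 + ν
  have hx : 0 < x := by positivity
  have hy : 0 < y := by positivity
  have hGx := Gamma_add_half_sq_le hx
  have hGy : y * Gamma (y + 1 / 2) ^ 2 ≤ Gamma (y + 1) ^ 2 := by
    rw [Gamma_add_one hy.ne']
    nlinarith [Gamma_add_half_sq_le hy]
  -- at `n = 2` this reads `9 ≤ 4 + 4ν`, the source of the threshold `5/4`
  have hpoly : (n + 1) ^ 2 * x ≤ ((n - 1) * n) ^ 2 * y := by
    simp only [x, y]; nlinarith [mul_nonneg (sub_nonneg.2 hn) (sub_nonneg.2 hn)]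
  rw [show (n + 1) / 2 + ν = y + 1 / 2 by ring, show (n + 1) / 2 = x + 1 / 2 by ring]
  have hLHS : 0 ≤ (n + 1) * Gamma (x + 1 / 2) * Gamma (y + 1 / 2) := by
    have := Gamma_pos_of_pos (by positivity : 0 < x + 1 / 2)
    have := Gamma_pos_of_pos (by positivity : 0 < y + 1 / 2)
    positivity
  have hRHS : 0 ≤ (n - 1) * n * Gamma x * Gamma (y + 1) := by
    have := Gamma_pos_of_pos hx
    have := Gamma_pos_of_pos (by positivity : 0 < y + 1)
    have : 0 ≤ n - 1 := by linarith
    positivity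
  refine (pow_le_pow_iff_left₀ hLHS hRHS two_ne_zero).1 (le_of_mul_le_mul_left ?_ hy)
  calc y * ((n + 1) * Gamma (x + 1 / 2) * Gamma (y + 1 / 2)) ^ 2
      = (n + 1) ^ 2 * Gamma (x + 1 / 2) ^ 2 * (y * Gamma (y + 1 / 2) ^ 2) := by ring
    _ ≤ (n + 1) ^ 2 * (x * Gamma x ^ 2) * Gamma (y + 1) ^ 2 := by gcongr
    _ = (n + 1) ^ 2 * x * (Gamma x ^ 2 * Gamma (y + 1) ^ 2) := by ring
    _ ≤ ((n - 1) * n) ^ 2 * y * (Gamma x ^ 2 * Gamma (y + 1) ^ 2) := by gcongr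
    _ = y * ((n - 1) * n * Gamma x * Gamma (y + 1)) ^ 2 := by ring

theorem besselStruveCoeff_succ_le {ν : ℝ} (hν : 5 / 4 ≤ ν) {n : ℕ} (hn : 2 ≤ n) :
    ((n : ℝ) + 1) * besselStruveCoeff ν (n + 1) ≤ ((n : ℝ) - 1) * besselStruveCoeff ν n := by
  obtain ⟨m, rfl⟩ : ∃ m, n = m + 1 := ⟨n - 1, by omega⟩
  have hm : (2 : ℝ) ≤ (m : ℝ) + 1 := by exact_mod_cast hn
  have key := succ_mul_Gamma_mul_Gamma_le hm hν
  simp only [besselStruveCoeff, Nat.add_sub_cancel, Nat.factorial_succ]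
  push_cast
  rw [show ((m : ℝ) + 1 + 1 + 1) / 2 + ν = ((m : ℝ) + 1) / 2 + ν + 1 by ring]
  have hΓ := Gamma_pos_of_pos (by linarith : 0 < ν + 1)
  have hπ := sqrt_pos.2 pi_pos
  have hfac : (0 : ℝ) < m.factorial := by positivity
  have hΓ₁ := Gamma_pos_of_pos (by positivity : 0 < ((m : ℝ) + 1 + 1) / 2 + ν)
  have hΓ₂ := Gamma_pos_of_pos (by positivity : 0 < ((m : ℝ) + 1) / 2 + ν + 1)
  rw [← mul_div_assoc, ← mul_div_assoc, div_le_div_iff₀ (by positivity) (by positivity)]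
  linear_combination (Gamma (ν + 1) * √π * m.factorial) * key

theorem coeff_conditions_above_nu_zero (ν₀ : ℝ) (hν₀ : 0 < ν₀)
    (hroot : Real.sqrt Real.pi * Real.Gamma (ν₀ + 3/2) = 8 * Real.Gamma (ν₀ + 1))
    (ν : ℝ) (hν : ν₀ ≤ ν) (a : ℕ → ℝ) (ha1 : a 1 = 1)
    (ha : ∀ n : ℕ, 2 ≤ n → a n = Real.Gamma (ν + 1) * Real.Gamma ((n : ℝ) / 2) /
      (Real.sqrt Real.pi * ((n - 1).factorial : ℝ) * Real.Gamma (((n : ℝ) + 1) / 2 + ν))) :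
    a 1 ≥ 8 * a 2 ∧
      ∀ n : ℕ, 2 ≤ n → ((n : ℝ) - 1) * a n ≥ ((n : ℝ) + 1) * a (n + 1) := by
  have hν' : 5 / 4 ≤ ν := by linarith [fifteen_le_of_sqrt_pi_mul_Gamma_eq hν₀ hroot]
  have hcoeff : ∀ n, 2 ≤ n → a n = besselStruveCoeff ν n := ha
  refine ⟨?_, fun n hn => ?_⟩
  · have hΓ := Gamma_pos_of_pos (by linarith : 0 < ν + 3 / 2)
    have hπ := sqrt_pos.2 pi_pos
    rw [ha1, hcoeff 2 le_rfl, besselStruveCoeff_two, ge_iff_le, ← mul_div_assoc,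
      div_le_one (by positivity)]
    exact eight_mul_Gamma_le_of_sqrt_pi_mul_Gamma_eq hν₀ hroot hν
  · rw [hcoeff n hn, hcoeff (n + 1) (by omega)]
    exact besselStruveCoeff_succ_le hν' hn
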